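/- In a residuated lattice, the α-filter generated by a filter F equals the union of x^⊥⊥ over all x ∈ F; i.e., α(F) = ⋃_{x∈F} x^⊥⊥. -/

import Mathlib

/-- A (bounded, integral, commutative) residuated lattice. -/
class ResLattice (A : Type*) extends Lattice A, CommMonoid A, OrderBot A where
  himp : A → A → A
  adjunction : ∀ x y z : A, x * y ≤ z ↔ x ≤ himp y z
  le_one : ∀ x : A, x ≤ 1

variable {A : Type*} [ResLattice A]

/-- Coannihilator of a subset: `X^⊥ = {a | a ⊔ x = 1 for all x ∈ X}`. -/
def Coann (X : Set A) : Set A := {a | ∀ x ∈ X, a ⊔ x = 1}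

/-- Coannulet of an element: `x^⊥`. -/
def rperp (x : A) : Set A := Coann {x}

/-- The principal filter generated by `x`. -/
def PFil (x : A) : Set A := {a | ∃ n : ℕ, 0 < n ∧ x ^ n ≤ a}

/-- Filters of a residuated lattice. -/
def IsRLFilter (F : Set A) : Prop :=
  F.Nonempty ∧ (∀ x ∈ F, ∀ y ∈ F, x * y ∈ F) ∧ (∀ x ∈ F, ∀ y : A, x ⊔ y ∈ F)

/-- Prime filters. -/
def IsRLPrime (P : Set A) : Prop :=
  IsRLFilter P ∧ P ≠ Set.univ ∧ ∀ x y : A, x ⊔ y ∈ P → x ∈ P ∨ y ∈ P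

/-- Minimal prime filters. -/
def IsRLMinPrime (P : Set A) : Prop :=
  IsRLPrime P ∧ ∀ Q : Set A, IsRLPrime Q → Q ⊆ P → Q = P

/-- Quasicomplemented residuated lattice. -/
def Quasicomplemented (A : Type*) [ResLattice A] : Prop :=
  ∀ x : A, ∃ y : A, Coann (rperp x) = rperp y

/-- α-filters. -/
def IsAlphaFilter (F : Set A) : Prop :=
  IsRLFilter F ∧ ∀ x ∈ F, Coann (rperp x) ⊆ F

/-- The α-filter generated by a subset. -/
def alphaGen (X : Set A) : Set A := ⋂₀ {G : Set A | IsAlphaFilter G ∧ X ⊆ G}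

/-!
The union `S` of the `x^⊥⊥` over `x ∈ F` is already an α-filter. It is closed upwards; it is
closed under `⊙` because `(a ⊔ c) ⊙ (b ⊔ c) ≤ a ⊙ b ⊔ c` gives `x^⊥⊥ ⊙ y^⊥⊥ ⊆ (x ⊙ y)^⊥⊥`; and
`a ∈ x^⊥⊥` means `x^⊥ ⊆ a^⊥`, whence `a^⊥⊥ ⊆ x^⊥⊥`. It contains `F` as `x ∈ x^⊥⊥`, and every
α-filter containing `F` contains each `x^⊥⊥`, so `S` is the least one.
-/

namespace ResLattice

instance : IsOrderedMonoid A where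
  mul_le_mul_left a b hab c :=
    (adjunction a c (b * c)).mpr <| hab.trans <| (adjunction b c (b * c)).mp le_rfl

theorem mul_sup_le (a b c : A) : a * (b ⊔ c) ≤ a * b ⊔ a * c := by
  rw [mul_comm, adjunction]
  refine sup_le ?_ ?_ <;> rw [← adjunction, mul_comm]
  exacts [le_sup_left, le_sup_right]

theorem sup_mul_le (a b c : A) : (a ⊔ b) * c ≤ a * c ⊔ b * c := by
  simpa only [mul_comm _ c] using mul_sup_le c a b

theorem mul_sup_eq_one {a b c : A} (ha : a ⊔ c = 1) (hb : b ⊔ c = 1) : a * b ⊔ c = 1 := by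
  refine le_antisymm (le_one _) ?_
  calc (1 : A) = (a ⊔ c) * (b ⊔ c) := by rw [ha, hb, mul_one]
    _ ≤ a * (b ⊔ c) ⊔ c * (b ⊔ c) := sup_mul_le a c _
    _ ≤ (a * b ⊔ a * c) ⊔ c :=
      sup_le_sup (mul_sup_le a b c) (mul_le_of_le_one_right' (le_one _))
    _ ≤ a * b ⊔ c := sup_le (sup_le_sup_left (mul_le_of_le_one_left' (le_one _)) _) le_sup_right

end ResLattice

open ResLattice

theorem mem_rperp {a x : A} : a ∈ rperp x ↔ a ⊔ x = 1 := by
  simp [rperp, Coann]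

theorem coann_anti {X Y : Set A} (h : X ⊆ Y) : Coann Y ⊆ Coann X :=
  fun _ ha x hx => ha x (h hx)

theorem sup_mem_coann {X : Set A} {a : A} (ha : a ∈ Coann X) (b : A) : a ⊔ b ∈ Coann X :=
  fun x hx => le_antisymm (le_one _) <| ha x hx ▸ sup_le_sup_right le_sup_left x

theorem rperp_mono {x y : A} (h : x ≤ y) : rperp x ⊆ rperp y := fun a ha =>
  mem_rperp.mpr <| le_antisymm (le_one _) <| mem_rperp.mp ha ▸ sup_le_sup_left h a

theorem mem_coann_rperp_self (x : A) : x ∈ Coann (rperp x) :=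
  fun c hc => by rw [sup_comm]; exact mem_rperp.mp hc

theorem rperp_subset_of_mem_coann_rperp {a x : A} (ha : a ∈ Coann (rperp x)) :
    rperp x ⊆ rperp a :=
  fun c hc => mem_rperp.mpr <| sup_comm a c ▸ ha c hc

theorem mul_mem_coann_rperp_mul {a b x y : A} (ha : a ∈ Coann (rperp x))
    (hb : b ∈ Coann (rperp y)) : a * b ∈ Coann (rperp (x * y)) := fun c hc =>
  mul_sup_eq_one (ha c (rperp_mono (mul_le_of_le_one_right' (le_one y)) hc))
    (hb c (rperp_mono (mul_le_of_le_one_left' (le_one x)) hc))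

theorem isAlphaFilter_biUnion_coann_rperp {F : Set A} (hF : IsRLFilter F) :
    IsAlphaFilter (⋃ x ∈ F, Coann (rperp x)) := by
  obtain ⟨hne, hmul, -⟩ := hF
  simp only [IsAlphaFilter, IsRLFilter, Set.mem_iUnion₂, exists_prop]
  refine ⟨⟨?_, ?_, ?_⟩, ?_⟩
  · obtain ⟨x, hx⟩ := hne
    exact ⟨x, Set.mem_biUnion hx (mem_coann_rperp_self x)⟩
  · rintro a ⟨x, hx, ha⟩ b ⟨y, hy, hb⟩
    exact ⟨x * y, hmul x hx y hy, mul_mem_coann_rperp_mul ha hb⟩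
  · rintro a ⟨x, hx, ha⟩ b
    exact ⟨x, hx, sup_mem_coann ha b⟩
  · rintro a ⟨x, hx, ha⟩ b hb
    exact Set.mem_biUnion hx (coann_anti (rperp_subset_of_mem_coann_rperp ha) hb)

theorem biUnion_coann_rperp_subset {F G : Set A} (hG : IsAlphaFilter G) (hFG : F ⊆ G) :
    ⋃ x ∈ F, Coann (rperp x) ⊆ G :=
  Set.iUnion₂_subset fun x hx => hG.2 x (hFG hx)

theorem alphaGen_eq_of_isLeast {X S : Set A} (hS : IsAlphaFilter S) (hXS : X ⊆ S)
    (hmin : ∀ G, IsAlphaFilter G → X ⊆ G → S ⊆ G) : alphaGen X = S :=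
  Set.Subset.antisymm (Set.sInter_subset_of_mem (t := S) ⟨hS, hXS⟩)
    fun _ ha G hG => hmin G hG.1 hG.2 ha

theorem stmt11 (F : Set A) (hF : IsRLFilter F) :
    alphaGen F = ⋃ x ∈ F, Coann (rperp x) :=
  alphaGen_eq_of_isLeast (isAlphaFilter_biUnion_coann_rperp hF)
    (fun x hx => Set.mem_biUnion hx (mem_coann_rperp_self x))
    fun _ hG hFG => biUnion_coann_rperp_subset hG hFG
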